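/- arXiv:1106.5044 — 5 statements merged into one kernel-verified Lean document; each statement's English description precedes it below -/
import Mathlib

section
/- Let X be a C¹ vector field on an open set Ω ⊆ ℝⁿ, ν : Ω → ℝ a C¹ nonvanishing function with div((1/ν)·X) = 0, and let C₁, …, C_{n−2}, H be conserved quantities of X. Suppose x(t) is an integral curve of X contained in the set where div(X) ≠ 0, and define the new time s by ds/dt = −div(X)(x(t)). Then the functions u₁ = 1/ν, u₂ = C₁/ν, …, u_{n−1} = C_{n−2}/ν, u_n = H/ν, evaluated along x and reparametrized by s, satisfy u′ᵢ = uᵢ for all i = 1, …, n. -/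
/-!
Write `L f = Df · X` for the derivative of `f` along `X`. The product rule
`div (g X) = g div X + L g` turns `div (X / ν) = 0` into `L (1/ν) = -(1/ν) div X`, and with
`L C = 0` for a conserved quantity also `L (C/ν) = -(C/ν) div X`. So every `uᵢ` satisfies
`d/dt uᵢ(x t) = -div X · uᵢ(x t)`, and the time change `ds = -div X dt` removes the factor.
-/

open Topology

/-- The `i`-th partial derivative of `f : (Fin n → ℝ) → ℝ`. -/
noncomputable def pd {n : ℕ} (i : Fin n) (f : (Fin n → ℝ) → ℝ) (x : Fin n → ℝ) : ℝ :=
  fderiv ℝ f x (Pi.single i 1)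

/-- Divergence of a vector field on `ℝⁿ` w.r.t. Lebesgue measure. -/
noncomputable def div' {n : ℕ} (X : (Fin n → ℝ) → (Fin n → ℝ)) (x : Fin n → ℝ) : ℝ :=
  ∑ i, pd i (fun y => X y i) x

theorem ContinuousLinearMap.apply_eq_sum_mul_single {ι : Type*} [Fintype ι] [DecidableEq ι]
    (L : (ι → ℝ) →L[ℝ] ℝ) (v : ι → ℝ) :
    L v = ∑ i, v i * L (Pi.single i 1) := by
  conv_lhs => rw [← Finset.univ_sum_single v, map_sum]
  refine Finset.sum_congr rfl fun i _ => ?_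
  rw [← smul_eq_mul, ← map_smul, ← Pi.single_smul, smul_eq_mul, mul_one]

section

variable {n : ℕ}

theorem fderiv_apply_eq_sum_pd (f : (Fin n → ℝ) → ℝ) (x v : Fin n → ℝ) :
    fderiv ℝ f x v = ∑ i, pd i f x * v i := by
  rw [ContinuousLinearMap.apply_eq_sum_mul_single]
  exact Finset.sum_congr rfl fun i _ => mul_comm _ _

theorem div'_smul {g : (Fin n → ℝ) → ℝ} {X : (Fin n → ℝ) → (Fin n → ℝ)} {x : Fin n → ℝ}
    (hg : DifferentiableAt ℝ g x) (hX : DifferentiableAt ℝ X x) :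
    div' (fun y => g y • X y) x = g x * div' X x + fderiv ℝ g x (X x) := by
  simp only [div', pd, Pi.smul_apply, smul_eq_mul,
    fderiv_fun_mul hg (differentiableAt_pi.1 hX _), add_apply, smul_apply,
    Finset.sum_add_distrib, ← Finset.mul_sum, fderiv_apply_eq_sum_pd g x (X x)]
  congr 1
  exact Finset.sum_congr rfl fun i _ => mul_comm _ _

theorem fderiv_inv_apply_of_div'_inv_smul_eq_zero {ν : (Fin n → ℝ) → ℝ}
    {X : (Fin n → ℝ) → (Fin n → ℝ)} {x : Fin n → ℝ} (hν : DifferentiableAt ℝ ν x)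
    (hν0 : ν x ≠ 0) (hX : DifferentiableAt ℝ X x)
    (hdf : div' (fun y => (ν y)⁻¹ • X y) x = 0) :
    fderiv ℝ (fun y => (ν y)⁻¹) x (X x) = -div' X x * (ν x)⁻¹ := by
  rw [div'_smul (g := fun y => (ν y)⁻¹) (hν.inv hν0) hX] at hdf
  linarith

theorem fderiv_mul_apply_of_fderiv_apply_eq_zero {F g : (Fin n → ℝ) → ℝ} {x v : Fin n → ℝ}
    {c : ℝ} (hF : DifferentiableAt ℝ F x) (hg : DifferentiableAt ℝ g x)
    (hFv : fderiv ℝ F x v = 0) (hgv : fderiv ℝ g x v = c * g x) :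
    fderiv ℝ (fun y => F y * g y) x v = c * (F x * g x) := by
  rw [fderiv_fun_mul hF hg, add_apply, smul_apply,
    smul_apply, hFv, hgv, smul_eq_mul, smul_eq_mul]
  ring

theorem hasDerivAt_comp_integralCurve_reparam {X : (Fin n → ℝ) → (Fin n → ℝ)}
    {g : (Fin n → ℝ) → ℝ} {x : ℝ → Fin n → ℝ} {τ : ℝ → ℝ} {s : ℝ}
    (hg : DifferentiableAt ℝ g (x (τ s)))
    (hgX : fderiv ℝ g (x (τ s)) (X (x (τ s))) = -div' X (x (τ s)) * g (x (τ s)))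
    (hode : HasDerivAt x (X (x (τ s))) (τ s)) (hdiv : div' X (x (τ s)) ≠ 0)
    (hτ : HasDerivAt τ (-(div' X (x (τ s))))⁻¹ s) :
    HasDerivAt (fun s => g (x (τ s))) (g (x (τ s))) s := by
  have hcurve := hg.hasFDerivAt.comp_hasDerivAt (τ s) hode
  rw [hgX] at hcurve
  have hreparam := hcurve.comp s hτ
  rwa [mul_right_comm, mul_inv_cancel₀ (neg_ne_zero.2 hdiv), one_mul] at hreparam

end

theorem main_linearization {m : ℕ} (Ω : Set (Fin (m + 2) → ℝ)) (hΩ : IsOpen Ω)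
    (X : (Fin (m + 2) → ℝ) → (Fin (m + 2) → ℝ)) (hX : ContDiffOn ℝ 1 X Ω)
    (ν : (Fin (m + 2) → ℝ) → ℝ) (hν : ContDiffOn ℝ 1 ν Ω) (hν0 : ∀ x ∈ Ω, ν x ≠ 0)
    (hdf : ∀ x ∈ Ω, div' (fun y => (ν y)⁻¹ • X y) x = 0)
    (F : Fin (m + 1) → (Fin (m + 2) → ℝ) → ℝ) (hF : ∀ k, ContDiffOn ℝ 1 (F k) Ω)
    (hcons : ∀ k, ∀ x ∈ Ω, (∑ i, pd i (F k) x * X x i) = 0)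
    (x : ℝ → Fin (m + 2) → ℝ) (hmem : ∀ t, x t ∈ Ω)
    (hode : ∀ t, HasDerivAt x (X (x t)) t)
    (hdiv : ∀ t, div' X (x t) ≠ 0)
    (τ : ℝ → ℝ) (hτ : ∀ s, HasDerivAt τ (-(div' X (x (τ s))))⁻¹ s)
    (u : Fin (m + 2) → (Fin (m + 2) → ℝ) → ℝ)
    (hu0 : u 0 = fun y => (ν y)⁻¹)
    (hui : ∀ k : Fin (m + 1), u k.succ = fun y => F k y / ν y) :
    ∀ (i : Fin (m + 2)) (s : ℝ),
      HasDerivAt (fun s => u i (x (τ s))) (u i (x (τ s))) s := by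
  intro i s
  set p := x (τ s)
  have hp : Ω ∈ 𝓝 p := hΩ.mem_nhds (hmem _)
  have hνp : DifferentiableAt ℝ ν p := (hν.differentiableOn one_ne_zero).differentiableAt hp
  have hνinv : DifferentiableAt ℝ (fun y => (ν y)⁻¹) p := hνp.inv (hν0 p (hmem _))
  have hνinvX : fderiv ℝ (fun y => (ν y)⁻¹) p (X p) = -div' X p * (ν p)⁻¹ :=
    fderiv_inv_apply_of_div'_inv_smul_eq_zero hνp (hν0 p (hmem _))
      ((hX.differentiableOn one_ne_zero).differentiableAt hp) (hdf p (hmem _))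
  have hu : DifferentiableAt ℝ (u i) p ∧ fderiv ℝ (u i) p (X p) = -div' X p * u i p := by
    induction i using Fin.cases with
    | zero => exact hu0 ▸ ⟨hνinv, hνinvX⟩
    | succ k =>
      have hFp := ((hF k).differentiableOn one_ne_zero).differentiableAt hp
      have hFX : fderiv ℝ (F k) p (X p) = 0 := by
        rw [fderiv_apply_eq_sum_pd]; exact hcons k p (hmem _)
      simp only [hui k, div_eq_mul_inv]
      exact ⟨hFp.mul hνinv, fderiv_mul_apply_of_fderiv_apply_eq_zero hFp hνinv hFX hνinvX⟩
  exact hasDerivAt_comp_integralCurve_reparam hu.1 hu.2 (hode _) (hdiv _) (hτ s)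
end

section
/- The function C(x₁,x₂,x₃) = x₂(x₁ + x₂ + x₃)/(x₁x₃) is a conserved quantity of the 3D Lotka–Volterra system ẋ₁ = x₁(x₂+x₃), ẋ₂ = x₂(−x₁+x₃), ẋ₃ = x₃(−x₁−x₂) on the open set where x₁x₃ ≠ 0; that is, ⟨∇C, X⟩ = 0 there, where X is the vector field of the system. -/
theorem sum_pd_mul_eq_fderiv {n : ℕ} (f : (Fin n → ℝ) → ℝ) (x v : Fin n → ℝ) :
    ∑ i, pd i f x * v i = fderiv ℝ f x v := by
  conv_rhs => rw [← Finset.univ_sum_single v, map_sum]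
  refine Finset.sum_congr rfl fun i _ => ?_
  rw [pd, mul_comm, ← smul_eq_mul, ← map_smul, ← Pi.single_smul', smul_eq_mul, mul_one]

theorem fderiv_mul_apply_eq_zero {𝕜 E : Type*} [NontriviallyNormedField 𝕜]
    [NormedAddCommGroup E] [NormedSpace 𝕜 E] {f g : E → 𝕜} {x v : E}
    (hf : DifferentiableAt 𝕜 f x) (hg : DifferentiableAt 𝕜 g x)
    (hfv : fderiv 𝕜 f x v = 0) (hgv : fderiv 𝕜 g x v = 0) :
    fderiv 𝕜 (fun y => f y * g y) x v = 0 := by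
  simp [fderiv_fun_mul hf hg, hfv, hgv]

/-- `hasFDerivAt_apply` with a constant fibre `ℝ`, in the form that `fun_add` and `fun_mul`
can unify with. -/
theorem hasFDerivAt_coord {ι : Type*} [Fintype ι] (i : ι) (x : ι → ℝ) :
    HasFDerivAt (fun y : ι → ℝ => y i) (ContinuousLinearMap.proj i : (ι → ℝ) →L[ℝ] ℝ) x :=
  hasFDerivAt_apply i x

def lotkaVolterra (x : Fin 3 → ℝ) : Fin 3 → ℝ :=
  ![x 0 * (x 1 + x 2), x 1 * (-(x 0) + x 2), x 2 * (-(x 0) - x 1)]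

theorem fderiv_total_apply_lotkaVolterra (x : Fin 3 → ℝ) :
    fderiv ℝ (fun y : Fin 3 → ℝ => y 0 + y 1 + y 2) x (lotkaVolterra x) = 0 := by
  have h := ((hasFDerivAt_coord 0 x).fun_add (hasFDerivAt_coord 1 x)).fun_add
    (hasFDerivAt_coord 2 x)
  rw [h.fderiv]
  simp only [lotkaVolterra, add_apply, ContinuousLinearMap.proj_apply,
    Matrix.cons_val_zero, Matrix.cons_val_one, Matrix.cons_val]
  ring

theorem fderiv_ratio_apply_lotkaVolterra (x : Fin 3 → ℝ) (hx : x 0 * x 2 ≠ 0) :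
    fderiv ℝ (fun y : Fin 3 → ℝ => y 1 * (y 0 * y 2)⁻¹) x (lotkaVolterra x) = 0 := by
  have h : HasFDerivAt (fun y : Fin 3 → ℝ => y 1 * (y 0 * y 2)⁻¹) _ x :=
    (hasFDerivAt_coord 1 x).fun_mul
      ((hasFDerivAt_inv' hx).comp x ((hasFDerivAt_coord 0 x).fun_mul (hasFDerivAt_coord 2 x)))
  rw [h.fderiv]
  simp only [lotkaVolterra, add_apply, neg_apply,
    smul_apply, ContinuousLinearMap.comp_apply, ContinuousLinearMap.proj_apply,
    ContinuousLinearMap.mulLeftRight_apply, smul_eq_mul, Matrix.cons_val_zero,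
    Matrix.cons_val_one, Matrix.cons_val]
  field_simp
  ring

theorem lotka_volterra_C_conserved :
    ∀ x : Fin 3 → ℝ, x 0 * x 2 ≠ 0 →
      (∑ i, pd i (fun y : Fin 3 → ℝ => y 1 * (y 0 + y 1 + y 2) / (y 0 * y 2)) x *
        (![x 0 * (x 1 + x 2), x 1 * (-(x 0) + x 2), x 2 * (-(x 0) - x 1)] i)) = 0 := by
  intro x hx
  have hC : (fun y : Fin 3 → ℝ => y 1 * (y 0 + y 1 + y 2) / (y 0 * y 2)) =
      fun y => (y 0 + y 1 + y 2) * (y 1 * (y 0 * y 2)⁻¹) := by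
    funext y
    ring
  rw [sum_pd_mul_eq_fderiv, hC]
  exact fderiv_mul_apply_eq_zero (by fun_prop) (by fun_prop (disch := exact hx))
    (fderiv_total_apply_lotkaVolterra x) (fderiv_ratio_apply_lotkaVolterra x hx)
end

section
/- Let x(t) = (x₁(t),x₂(t),x₃(t)) be a solution of the 3D Lotka–Volterra system ẋ₁ = x₁(x₂+x₃), ẋ₂ = x₂(−x₁+x₃), ẋ₃ = x₃(−x₁−x₂) staying in the region where x₁ ≠ x₃, x₁x₃ ≠ 0, and x₁+x₂+x₃ ≠ 0. Then each of the functions u₁ = −(x₁+x₂+x₃)/(x₁²x₃²), u₂ = −x₂(x₁+x₂+x₃)²/(x₁³x₃³), u₃ = −(x₁+x₂+x₃)²/(x₁²x₃²), evaluated along x(t), satisfies duᵢ/dt = 2(x₁ − x₃)·uᵢ. -/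
/-!
The sum `S = x₁ + x₂ + x₃` is a first integral, while `P = x₁ x₃` and `x₂` both satisfy
`y' = (x₃ - x₁) y`. Each `uᵢ` is, up to sign, a monomial `x₂ᵉ Sᵏ / Pᵐ` with `m - e = 2`, so its
logarithmic derivative is `(m - e)(x₁ - x₃) = 2 (x₁ - x₃)`.
-/

section Proportional

variable {𝕜 : Type*} [NontriviallyNormedField 𝕜] {f g : 𝕜 → 𝕜} {a b x : 𝕜}

theorem HasDerivAt.neg_proportional (hf : HasDerivAt f (a * f x) x) :
    HasDerivAt (fun y => -f y) (a * -f x) x :=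
  hf.neg.congr_deriv (by ring)

theorem HasDerivAt.mul_proportional (hf : HasDerivAt f (a * f x) x)
    (hg : HasDerivAt g (b * g x) x) :
    HasDerivAt (fun y => f y * g y) ((a + b) * (f x * g x)) x :=
  (hf.mul hg).congr_deriv (by ring)

theorem HasDerivAt.pow_proportional (hf : HasDerivAt f (a * f x) x) (n : ℕ) :
    HasDerivAt (fun y => f y ^ n) (n * a * f x ^ n) x := by
  refine (hf.pow n).congr_deriv ?_
  rcases n with _ | n
  · simp
  · push_cast
    ring

theorem HasDerivAt.div_proportional (hf : HasDerivAt f (a * f x) x)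
    (hg : HasDerivAt g (b * g x) x) (hx : g x ≠ 0) :
    HasDerivAt (fun y => f y / g y) ((a - b) * (f x / g x)) x :=
  (hf.div hg hx).congr_deriv (by field_simp)

end Proportional

section LotkaVolterra

variable {x₁ x₂ x₃ : ℝ → ℝ} {t : ℝ}

theorem lotkaVolterra_hasDerivAt_sum
    (h1 : HasDerivAt x₁ (x₁ t * (x₂ t + x₃ t)) t)
    (h2 : HasDerivAt x₂ (x₂ t * (-(x₁ t) + x₃ t)) t)
    (h3 : HasDerivAt x₃ (x₃ t * (-(x₁ t) - x₂ t)) t) :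
    HasDerivAt (fun s => x₁ s + x₂ s + x₃ s) (0 * (x₁ t + x₂ t + x₃ t)) t :=
  ((h1.add h2).add h3).congr_deriv (by ring)

theorem lotkaVolterra_hasDerivAt_mul
    (h1 : HasDerivAt x₁ (x₁ t * (x₂ t + x₃ t)) t)
    (h3 : HasDerivAt x₃ (x₃ t * (-(x₁ t) - x₂ t)) t) :
    HasDerivAt (fun s => x₁ s * x₃ s) ((x₃ t - x₁ t) * (x₁ t * x₃ t)) t :=
  (h1.mul h3).congr_deriv (by ring)

end LotkaVolterra

theorem lotka_volterra_linearization (x₁ x₂ x₃ : ℝ → ℝ)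
    (h1 : ∀ t, HasDerivAt x₁ (x₁ t * (x₂ t + x₃ t)) t)
    (h2 : ∀ t, HasDerivAt x₂ (x₂ t * (-(x₁ t) + x₃ t)) t)
    (h3 : ∀ t, HasDerivAt x₃ (x₃ t * (-(x₁ t) - x₂ t)) t)
    (hreg : ∀ t, x₁ t ≠ x₃ t ∧ x₁ t * x₃ t ≠ 0 ∧ x₁ t + x₂ t + x₃ t ≠ 0)
    (u₁ u₂ u₃ : ℝ → ℝ)
    (hu₁ : u₁ = fun t => -((x₁ t + x₂ t + x₃ t) / (x₁ t ^ 2 * x₃ t ^ 2)))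
    (hu₂ : u₂ = fun t => -(x₂ t * (x₁ t + x₂ t + x₃ t) ^ 2 / (x₁ t ^ 3 * x₃ t ^ 3)))
    (hu₃ : u₃ = fun t => -((x₁ t + x₂ t + x₃ t) ^ 2 / (x₁ t ^ 2 * x₃ t ^ 2))) :
    ∀ t, HasDerivAt u₁ (2 * (x₁ t - x₃ t) * u₁ t) t ∧
         HasDerivAt u₂ (2 * (x₁ t - x₃ t) * u₂ t) t ∧
         HasDerivAt u₃ (2 * (x₁ t - x₃ t) * u₃ t) t := by
  intro t
  have hP0 : (x₁ t * x₃ t) ≠ 0 := (hreg t).2.1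
  have hS := lotkaVolterra_hasDerivAt_sum (h1 t) (h2 t) (h3 t)
  have hP := lotkaVolterra_hasDerivAt_mul (h1 t) (h3 t)
  have hx₂ : HasDerivAt x₂ ((x₃ t - x₁ t) * x₂ t) t := (h2 t).congr_deriv (by ring)
  refine ⟨?_, ?_, ?_⟩
  · have := (hS.div_proportional (hP.pow_proportional 2) (pow_ne_zero 2 hP0)).neg_proportional
    simp only [hu₁, mul_pow] at this ⊢
    exact this.congr_deriv (by push_cast; ring)
  · have := ((hx₂.mul_proportional (hS.pow_proportional 2)).div_proportional
      (hP.pow_proportional 3) (pow_ne_zero 3 hP0)).neg_proportional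
    simp only [hu₂, mul_pow] at this ⊢
    exact this.congr_deriv (by push_cast; ring)
  · have := ((hS.pow_proportional 2).div_proportional (hP.pow_proportional 2)
      (pow_ne_zero 2 hP0)).neg_proportional
    simp only [hu₃, mul_pow] at this ⊢
    exact this.congr_deriv (by push_cast; ring)
end

section
/- Let I₁, I₂, I₃ be nonzero reals with I₂ ≠ I₃, and let x(t′) be a solution of the rescaled Euler system dx₁/dt′ = (I₂−I₃)/(I₂I₃)·x₁x₂x₃, dx₂/dt′ = (I₃−I₁)/(I₁I₃)·x₁²x₃, dx₃/dt′ = (I₁−I₂)/(I₁I₂)·x₁²x₂, staying in the region x₁x₂x₃ ≠ 0. Then each of u₁ = −1/x₁, u₂ = −(x₁²+x₂²+x₃²)/(2x₁), u₃ = −x₁/(2I₁) − x₂²/(2x₁I₂) − x₃²/(2x₁I₃), evaluated along x(t′), satisfies duᵢ/dt′ = (I₃−I₂)/(I₂I₃)·x₂x₃·uᵢ. -/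
/-! Along the rescaled Euler flow both `x₁² + x₂² + x₃²` and `x₁²/I₁ + x₂²/I₂ + x₃²/I₃` are
conserved, while `x₁' = k x₂x₃ · x₁` with `k = (I₂ − I₃)/(I₂I₃)`. Each `uᵢ` is a constant
multiple of `Cᵢ / x₁` for a conserved `Cᵢ` (with `C₁ = 1`), so `uᵢ' = −k x₂x₃ · uᵢ`. -/

theorem HasDerivAt.const_mul_div_of_hasDerivAt_zero {f C : ℝ → ℝ} {a t : ℝ} (c : ℝ)
    (hf : HasDerivAt f (a * f t) t) (hC : HasDerivAt C 0 t) (hft : f t ≠ 0) :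
    HasDerivAt (fun s => c * (C s / f s)) (-a * (c * (C t / f t))) t :=
  ((hC.div hf hft).const_mul c).congr_deriv (by field_simp; ring)

theorem hasDerivAt_weighted_sq_sum_eq_zero {x₁ x₂ x₃ : ℝ → ℝ} {c₁ c₂ c₃ t : ℝ}
    (hd1 : HasDerivAt x₁ (c₁ * (x₁ t * x₂ t * x₃ t)) t)
    (hd2 : HasDerivAt x₂ (c₂ * (x₁ t ^ 2 * x₃ t)) t)
    (hd3 : HasDerivAt x₃ (c₃ * (x₁ t ^ 2 * x₂ t)) t)
    {w₁ w₂ w₃ : ℝ} (hw : w₁ * c₁ + w₂ * c₂ + w₃ * c₃ = 0) :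
    HasDerivAt (fun s => w₁ * x₁ s ^ 2 + w₂ * x₂ s ^ 2 + w₃ * x₃ s ^ 2) 0 t := by
  have h := (((hd1.pow 2).const_mul w₁).add ((hd2.pow 2).const_mul w₂)).add
    ((hd3.pow 2).const_mul w₃)
  -- each `(xᵢ²)'` equals `2 cᵢ x₁² x₂ x₃`
  refine h.congr_deriv ?_
  linear_combination (2 * (x₁ t ^ 2 * x₂ t * x₃ t)) * hw

theorem rescaled_euler_linearization_general (I₁ I₂ I₃ : ℝ)
    (h1 : I₁ ≠ 0) (h2 : I₂ ≠ 0) (h3 : I₃ ≠ 0)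
    (x₁ x₂ x₃ : ℝ → ℝ)
    (hd1 : ∀ t, HasDerivAt x₁ ((I₂ - I₃) / (I₂ * I₃) * (x₁ t * x₂ t * x₃ t)) t)
    (hd2 : ∀ t, HasDerivAt x₂ ((I₃ - I₁) / (I₁ * I₃) * (x₁ t ^ 2 * x₃ t)) t)
    (hd3 : ∀ t, HasDerivAt x₃ ((I₁ - I₂) / (I₁ * I₂) * (x₁ t ^ 2 * x₂ t)) t)
    (hreg : ∀ t, x₁ t * x₂ t * x₃ t ≠ 0)
    (u₁ u₂ u₃ : ℝ → ℝ)
    (hu₁ : u₁ = fun t => -(1 / x₁ t))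
    (hu₂ : u₂ = fun t => -((x₁ t ^ 2 + x₂ t ^ 2 + x₃ t ^ 2) / (2 * x₁ t)))
    (hu₃ : u₃ = fun t => -(x₁ t / (2 * I₁)) - x₂ t ^ 2 / (2 * x₁ t * I₂)
                  - x₃ t ^ 2 / (2 * x₁ t * I₃)) :
    ∀ t, HasDerivAt u₁ ((I₃ - I₂) / (I₂ * I₃) * (x₂ t * x₃ t) * u₁ t) t ∧
         HasDerivAt u₂ ((I₃ - I₂) / (I₂ * I₃) * (x₂ t * x₃ t) * u₂ t) t ∧
         HasDerivAt u₃ ((I₃ - I₂) / (I₂ * I₃) * (x₂ t * x₃ t) * u₃ t) t := by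
  intro t
  have hx₁ : ∀ s, x₁ s ≠ 0 := fun s h => hreg s (by simp [h])
  have hgrowth : HasDerivAt x₁ ((I₂ - I₃) / (I₂ * I₃) * (x₂ t * x₃ t) * x₁ t) t :=
    (hd1 t).congr_deriv (by ring)
  have hrate : -((I₂ - I₃) / (I₂ * I₃) * (x₂ t * x₃ t)) =
      (I₃ - I₂) / (I₂ * I₃) * (x₂ t * x₃ t) := by ring
  have hquot (c : ℝ) {C : ℝ → ℝ} (hC : HasDerivAt C 0 t) := hrate ▸
    hgrowth.const_mul_div_of_hasDerivAt_zero c hC (hx₁ t)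
  have hsq := hasDerivAt_weighted_sq_sum_eq_zero (hd1 t) (hd2 t) (hd3 t)
    (w₁ := 1) (w₂ := 1) (w₃ := 1) (by field_simp; ring)
  have henergy := hasDerivAt_weighted_sq_sum_eq_zero (hd1 t) (hd2 t) (hd3 t)
    (w₁ := 1 / I₁) (w₂ := 1 / I₂) (w₃ := 1 / I₃) (by field_simp; ring)
  have hu₁' : u₁ = fun s => -1 * (1 / x₁ s) := by rw [hu₁]; ext s; ring
  have hu₂' : u₂ = fun s => -1 / 2 * ((1 * x₁ s ^ 2 + 1 * x₂ s ^ 2 + 1 * x₃ s ^ 2) / x₁ s) := by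
    rw [hu₂]; ext s; ring
  have hu₃' : u₃ = fun s =>
      -1 / 2 * ((1 / I₁ * x₁ s ^ 2 + 1 / I₂ * x₂ s ^ 2 + 1 / I₃ * x₃ s ^ 2) / x₁ s) := by
    rw [hu₃]; ext s; field_simp [hx₁ s]; ring
  rw [hu₁', hu₂', hu₃']
  exact ⟨hquot (-1) (hasDerivAt_const t 1), hquot (-1 / 2) hsq, hquot (-1 / 2) henergy⟩

theorem rescaled_euler_linearization (I₁ I₂ I₃ : ℝ)
    (h1 : I₁ ≠ 0) (h2 : I₂ ≠ 0) (h3 : I₃ ≠ 0) (h23 : I₂ ≠ I₃)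
    (x₁ x₂ x₃ : ℝ → ℝ)
    (hd1 : ∀ t, HasDerivAt x₁ ((I₂ - I₃) / (I₂ * I₃) * (x₁ t * x₂ t * x₃ t)) t)
    (hd2 : ∀ t, HasDerivAt x₂ ((I₃ - I₁) / (I₁ * I₃) * (x₁ t ^ 2 * x₃ t)) t)
    (hd3 : ∀ t, HasDerivAt x₃ ((I₁ - I₂) / (I₁ * I₂) * (x₁ t ^ 2 * x₂ t)) t)
    (hreg : ∀ t, x₁ t * x₂ t * x₃ t ≠ 0)
    (u₁ u₂ u₃ : ℝ → ℝ)
    (hu₁ : u₁ = fun t => -(1 / x₁ t))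
    (hu₂ : u₂ = fun t => -((x₁ t ^ 2 + x₂ t ^ 2 + x₃ t ^ 2) / (2 * x₁ t)))
    (hu₃ : u₃ = fun t => -(x₁ t / (2 * I₁)) - x₂ t ^ 2 / (2 * x₁ t * I₂)
                  - x₃ t ^ 2 / (2 * x₁ t * I₃)) :
    ∀ t, HasDerivAt u₁ ((I₃ - I₂) / (I₂ * I₃) * (x₂ t * x₃ t) * u₁ t) t ∧
         HasDerivAt u₂ ((I₃ - I₂) / (I₂ * I₃) * (x₂ t * x₃ t) * u₂ t) t ∧
         HasDerivAt u₃ ((I₃ - I₂) / (I₂ * I₃) * (x₂ t * x₃ t) * u₃ t) t :=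
  rescaled_euler_linearization_general I₁ I₂ I₃ h1 h2 h3 x₁ x₂ x₃ hd1 hd2 hd3 hreg u₁ u₂ u₃ hu₁ hu₂
    hu₃
end

section
/- For C² functions C₁, C₂, H : ℝ⁴ → ℝ, the vector field X̃ on ℝ⁴ with components X̃ᵢ = ∂(C₁, C₂, xᵢ, H)/∂(x₁,x₂,x₃,x₄) (the 4×4 Jacobian determinant of the map (C₁, C₂, πᵢ, H), where πᵢ is the i-th coordinate projection) is divergence-free: ∑ᵢ₌₁⁴ ∂ᵢX̃ᵢ = 0. -/
open Finset Equiv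

theorem Equiv.Perm.sum_sign_mul_eq_zero_of_mul_swap {ι R : Type*} [DecidableEq ι] [Fintype ι]
    [Ring R] {T : Perm ι → R} {a b : ι} (hab : a ≠ b) (hT : ∀ σ, T (σ * swap a b) = T σ) :
    ∑ σ, (σ.sign : R) * T σ = 0 :=
  sum_ninvolution (· * swap a b) (fun σ => by simp [hT, Perm.sign_mul, Perm.sign_swap hab])
    (fun σ _ => by simpa using hab) (fun _ => mem_univ _) (fun σ => by simp [mul_assoc])

section PartialDerivatives

variable {n : ℕ} {x : Fin n → ℝ}

lemma contDiff_pd {f : (Fin n → ℝ) → ℝ} (hf : ContDiff ℝ 2 f) (i : Fin n) :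
    ContDiff ℝ 1 (pd i f) :=
  (hf.fderiv_right (by norm_num)).clm_apply contDiff_const

lemma pd_comm {f : (Fin n → ℝ) → ℝ} (hf : ContDiff ℝ 2 f) (i j : Fin n) :
    pd i (pd j f) x = pd j (pd i f) x := by
  have hdf : DifferentiableAt ℝ (fderiv ℝ f) x :=
    (hf.fderiv_right (by norm_num)).differentiable one_ne_zero x
  have hpd (v w : Fin n → ℝ) : fderiv ℝ (fun y => fderiv ℝ f y v) x w
      = fderiv ℝ (fderiv ℝ f) x w v := by
    rw [fderiv_clm_apply hdf (differentiableAt_const v)]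
    simp
  change fderiv ℝ (fun y => fderiv ℝ f y (Pi.single j 1)) x (Pi.single i 1)
    = fderiv ℝ (fun y => fderiv ℝ f y (Pi.single i 1)) x (Pi.single j 1)
  rw [hpd, hpd]
  exact (hf.contDiffAt.isSymmSndFDerivAt (by norm_num)) _ _

lemma pd_coord (i j : Fin n) (y : Fin n → ℝ) :
    pd i (fun z => z j) y = if i = j then 1 else 0 := by
  have hproj : (fun z : Fin n → ℝ => z j) = ContinuousLinearMap.proj (R := ℝ) j := rfl
  simp [pd, hproj, Pi.single_apply, eq_comm]

lemma pd_sum {ι : Type*} {s : Finset ι} {g : ι → (Fin n → ℝ) → ℝ}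
    (hg : ∀ k ∈ s, DifferentiableAt ℝ (g k) x) (i : Fin n) :
    pd i (fun y => ∑ k ∈ s, g k y) x = ∑ k ∈ s, pd i (g k) x := by
  simp [pd, fderiv_fun_sum hg]

lemma pd_const_mul {g : (Fin n → ℝ) → ℝ} (hg : DifferentiableAt ℝ g x) (c : ℝ) (i : Fin n) :
    pd i (fun y => c * g y) x = c * pd i g x := by
  simp [pd, fderiv_const_mul hg]

lemma pd_prod {ι : Type*} [DecidableEq ι] {s : Finset ι} {g : ι → (Fin n → ℝ) → ℝ}
    (hg : ∀ k ∈ s, DifferentiableAt ℝ (g k) x) (i : Fin n) :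
    pd i (fun y => ∏ k ∈ s, g k y) x = ∑ k ∈ s, pd i (g k) x * ∏ l ∈ s.erase k, g l x := by
  simp [pd, fderiv_finsetProd hg, mul_comm]

end PartialDerivatives

section FlaschkaRatiu

variable {n : ℕ}

noncomputable def flaschkaRatiuField (f : Fin n → (Fin n → ℝ) → ℝ) (p : Fin n)
    (y : Fin n → ℝ) : Fin n → ℝ :=
  fun i => (Matrix.of fun r c => pd c (Function.update f p (fun z => z i) r) y).det

lemma flaschkaRatiuField_eq_sum (f : Fin n → (Fin n → ℝ) → ℝ) (p : Fin n) (y : Fin n → ℝ)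
    (i : Fin n) :
    flaschkaRatiuField f p y i
      = ∑ σ : Perm (Fin n) with σ p = i, (σ.sign : ℝ) * ∏ r ∈ univ.erase p, pd (σ r) (f r) y := by
  rw [flaschkaRatiuField, ← Matrix.det_transpose, Matrix.det_apply', sum_filter]
  refine sum_congr rfl fun σ _ => ?_
  rw [← mul_prod_erase univ _ (mem_univ p)]
  have hrow : ∀ r ∈ univ.erase p, Function.update f p (fun z => z i) r = f r :=
    fun r hr => Function.update_of_ne (ne_of_mem_erase hr) _ _
  simp only [Matrix.transpose_apply, Matrix.of_apply, Function.update_self, pd_coord,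
    prod_congr rfl fun r hr => congrArg (pd (σ r) · y) (hrow r hr)]
  split_ifs <;> simp

theorem div'_flaschkaRatiuField_eq_zero {f : Fin n → (Fin n → ℝ) → ℝ} {p : Fin n}
    (hf : ∀ r ≠ p, ContDiff ℝ 2 (f r)) (x : Fin n → ℝ) :
    div' (flaschkaRatiuField f p) x = 0 := by
  have hdiff : ∀ (σ : Perm (Fin n)), ∀ r ∈ univ.erase p, DifferentiableAt ℝ (pd (σ r) (f r)) x :=
    fun σ r hr => (contDiff_pd (hf r (ne_of_mem_erase hr)) _).differentiable one_ne_zero x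
  have hprod : ∀ σ : Perm (Fin n),
      DifferentiableAt ℝ (fun y => ∏ r ∈ univ.erase p, pd (σ r) (f r) y) x :=
    fun σ => (HasFDerivAt.finsetProd fun r hr => (hdiff σ r hr).hasFDerivAt).differentiableAt
  let T : Perm (Fin n) → Fin n → ℝ := fun σ r =>
    pd (σ p) (pd (σ r) (f r)) x * ∏ l ∈ (univ.erase p).erase r, pd (σ l) (f l) x
  have hT : ∀ r ∈ univ.erase p, ∀ σ, T (σ * swap r p) r = T σ r := by
    intro r hr σ
    have hfix : ∀ l ∈ (univ.erase p).erase r, swap r p l = l := fun l hl =>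
      swap_apply_of_ne_of_ne (ne_of_mem_erase hl) (ne_of_mem_erase (mem_of_mem_erase hl))
    simp only [T, Perm.mul_apply, swap_apply_left, swap_apply_right,
      pd_comm (hf r (ne_of_mem_erase hr)) (σ r)]
    congr 1
    exact prod_congr rfl fun l hl => by rw [hfix l hl]
  calc div' (flaschkaRatiuField f p) x
      = ∑ i, ∑ σ : Perm (Fin n) with σ p = i,
          (σ.sign : ℝ) * pd i (fun y => ∏ r ∈ univ.erase p, pd (σ r) (f r) y) x := by
        simp only [div', flaschkaRatiuField_eq_sum]
        refine sum_congr rfl fun i _ => ?_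
        rw [pd_sum fun σ _ => (hprod σ).const_mul _]
        exact sum_congr rfl fun σ _ => pd_const_mul (hprod σ) _ _
    _ = ∑ σ : Perm (Fin n), (σ.sign : ℝ) * ∑ r ∈ univ.erase p, T σ r := by
        rw [← sum_fiberwise univ (fun σ : Perm (Fin n) => σ p)]
        refine sum_congr rfl fun i _ => sum_congr rfl fun σ hσ => ?_
        rw [← (mem_filter.1 hσ).2, pd_prod (hdiff σ)]
    _ = ∑ r ∈ univ.erase p, ∑ σ : Perm (Fin n), (σ.sign : ℝ) * T σ r := by
        simp only [mul_sum]
        exact sum_comm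
    _ = 0 := sum_eq_zero fun r hr =>
        Perm.sum_sign_mul_eq_zero_of_mul_swap (ne_of_mem_erase hr) (hT r hr)

end FlaschkaRatiu

theorem flaschka_ratiu_div_free_dim4
    (C₁ C₂ H : (Fin 4 → ℝ) → ℝ)
    (hC₁ : ContDiff ℝ 2 C₁) (hC₂ : ContDiff ℝ 2 C₂) (hH : ContDiff ℝ 2 H)
    (Xt : Fin 4 → (Fin 4 → ℝ) → ℝ)
    (hXt : ∀ i x, Xt i x =
      (Matrix.of fun r c : Fin 4 =>
        pd c (![C₁, C₂, fun y => y i, H] r) x).det) :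
    ∀ x, (∑ i, pd i (Xt i) x) = 0 := by
  have hrows : ∀ i, Function.update ![C₁, C₂, 0, H] 2 (fun y => y i) = ![C₁, C₂, fun y => y i, H] :=
    fun i => by ext r : 1; fin_cases r <;> rfl
  have hX : ∀ i, Xt i = fun y => flaschkaRatiuField ![C₁, C₂, 0, H] 2 y i :=
    fun i => funext fun y => by rw [hXt, flaschkaRatiuField, hrows]
  intro x
  simp only [hX]
  refine div'_flaschkaRatiuField_eq_zero (fun r hr => ?_) x
  fin_cases r
  exacts [hC₁, hC₂, absurd rfl hr, hH]
end
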